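/- arXiv:2404.11746 — 6 statements merged into one kernel-verified Lean document; each statement's English description precedes it below -/
import Mathlib

section
/- Let ℓ > 0, k > 1, and r = min{i ∈ [0,ℓ] : k^(ℓ−i) ≤ 2^(k^i) − 1}. Then ⌊log_k ℓ⌋ ≤ r ≤ ⌊log_k ℓ⌋ + 2. -/
/-!
Write `L = ⌊log_k ℓ⌋`, so `k ^ L ≤ ℓ < k ^ (L + 1)`. An index `i < L` is too small:
`k ^ (i + 1) ≤ ℓ` leaves `ℓ - i ≥ k ^ i`, hence `k ^ (ℓ - i) ≥ 2 ^ (ℓ - i) ≥ 2 ^ (k ^ i)`.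
The index `L + 2` is large enough: with `m = ℓ - (L + 2) < k ^ (L + 1)` we get
`k ^ m ≤ 2 ^ (k m) < 2 ^ (k ^ (L + 2))`.
-/

def admissible (k ℓ : ℕ) : Set ℕ := {i | i ≤ ℓ ∧ k ^ (ℓ - i) ≤ 2 ^ (k ^ i) - 1}

theorem mem_admissible_iff {k ℓ i : ℕ} :
    i ∈ admissible k ℓ ↔ i ≤ ℓ ∧ k ^ (ℓ - i) < 2 ^ (k ^ i) := by
  simp only [admissible, Set.mem_ofPred_eq, Nat.le_sub_one_iff_lt (Nat.two_pow_pos _)]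

theorem self_mem_admissible {k : ℕ} (hk : 0 < k) (ℓ : ℕ) : ℓ ∈ admissible k ℓ := by
  rw [mem_admissible_iff, Nat.sub_self, pow_zero]
  exact ⟨le_rfl, Nat.one_lt_two_pow (pow_pos hk ℓ).ne'⟩

theorem pow_add_le_pow_succ {k : ℕ} (hk : 2 ≤ k) (i : ℕ) : k ^ i + i ≤ k ^ (i + 1) :=
  calc k ^ i + i ≤ k ^ i + k ^ i := by
        gcongr
        exact (Nat.lt_two_pow_self).le.trans (Nat.pow_le_pow_left hk i)
    _ = k ^ i * 2 := by ring
    _ ≤ k ^ i * k := by gcongr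
    _ = k ^ (i + 1) := (pow_succ k i).symm

theorem two_pow_pow_le_pow_sub {k ℓ i : ℕ} (hk : 2 ≤ k) (h : k ^ (i + 1) ≤ ℓ) :
    2 ^ (k ^ i) ≤ k ^ (ℓ - i) :=
  calc 2 ^ (k ^ i) ≤ 2 ^ (ℓ - i) := by
        have := pow_add_le_pow_succ hk i
        exact Nat.pow_le_pow_right two_pos (by omega)
    _ ≤ k ^ (ℓ - i) := Nat.pow_le_pow_left hk _

theorem pow_lt_two_pow_pow_succ {k m n : ℕ} (hk : 0 < k) (h : m < k ^ n) :
    k ^ m < 2 ^ (k ^ (n + 1)) :=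
  calc k ^ m ≤ (2 ^ k) ^ m := Nat.pow_le_pow_left Nat.lt_two_pow_self.le m
    _ = 2 ^ (k * m) := (pow_mul 2 k m).symm
    _ < 2 ^ (k ^ (n + 1)) := by
        rw [pow_succ']
        exact Nat.pow_lt_pow_right one_lt_two (Nat.mul_lt_mul_of_pos_left h hk)

theorem log_le_of_mem_admissible {k ℓ i : ℕ} (hk : 2 ≤ k) (hi : i ∈ admissible k ℓ) :
    Nat.log k ℓ ≤ i := by
  by_contra! hlt
  have hℓ : ℓ ≠ 0 := fun h0 => by simp [h0] at hlt
  have hpow : k ^ (i + 1) ≤ ℓ :=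
    (Nat.pow_le_pow_right (by omega) hlt).trans (Nat.pow_log_le_self k hℓ)
  exact (mem_admissible_iff.mp hi).2.not_ge (two_pow_pow_le_pow_sub hk hpow)

theorem log_add_two_mem_admissible {k ℓ : ℕ} (hk : 2 ≤ k) (h : Nat.log k ℓ + 2 ≤ ℓ) :
    Nat.log k ℓ + 2 ∈ admissible k ℓ := by
  refine mem_admissible_iff.mpr ⟨h, pow_lt_two_pow_pow_succ (by omega) ?_⟩
  exact (Nat.sub_le ℓ _).trans_lt (Nat.lt_pow_succ_log_self (by omega) ℓ)

theorem stmt1_general (k ℓ : ℕ) (hk : 2 ≤ k)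
    (r : ℕ) (hr : r = sInf {i | i ≤ ℓ ∧ k ^ (ℓ - i) ≤ 2 ^ (k ^ i) - 1}) :
    Nat.log k ℓ ≤ r ∧ r ≤ Nat.log k ℓ + 2 := by
  change r = sInf (admissible k ℓ) at hr
  have hr_mem : r ∈ admissible k ℓ := hr ▸ Nat.sInf_mem ⟨ℓ, self_mem_admissible (by omega) ℓ⟩
  refine ⟨log_le_of_mem_admissible hk hr_mem, ?_⟩
  rcases le_or_gt (Nat.log k ℓ + 2) ℓ with hle | hgt
  · exact hr ▸ Nat.sInf_le (log_add_two_mem_admissible hk hle)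
  · have : r ≤ ℓ := (mem_admissible_iff.mp hr_mem).1
    omega

theorem stmt1 (k ℓ : ℕ) (hk : 2 ≤ k) (hℓ : 1 ≤ ℓ)
    (r : ℕ) (hr : r = sInf {i | i ≤ ℓ ∧ k ^ (ℓ - i) ≤ 2 ^ (k ^ i) - 1}) :
    Nat.log k ℓ ≤ r ∧ r ≤ Nat.log k ℓ + 2 :=
  stmt1_general k ℓ hk r hr
end

section
/- Every minimal NFA accepting a block language L ⊆ Σ^ℓ, with |Σ| = k ≥ 2, has at most min(k^(ℓ−i), k^i) states in each rank i ∈ [0,ℓ]; consequently the nondeterministic state complexity of L is at most 2·(k^(ℓ/2)−1)/(k−1) + k^(ℓ/2) if ℓ is even, and at most 2·(k^(⌈ℓ/2⌉)−1)/(k−1) if ℓ is odd. -/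
/-!
In a minimal NFA for a block language of length `ℓ` every state is useful, so the rank of a
state is `ℓ` minus the length of any word leading to it, and transitions lower the rank by one.
Write `Qᵢ` for the set of states of rank `i`. Replacing some states by new states that stand for
sets of old states, as in the subset construction, cannot shrink a minimal NFA. This gives
`|Q_ℓ| ≤ 1` (merge the start states) and `|Qᵢ| ≤ k |Qᵢ₊₁|` for `i < ℓ` (replace the states of
rank `i` by the pairs `(p, a)` with `p` of rank `i + 1`, standing for `step p a`). Hence
`|Qᵢ| ≤ k ^ (ℓ - i)`; reversing the automaton exchanges ranks `i` and `ℓ - i` and gives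
`|Qᵢ| ≤ k ^ i`. Summing `k ^ min i (ℓ - i)` over the ranks yields the two geometric sums.
-/

/-- Nondeterministic state complexity: the minimal number of states of an NFA accepting `L`. -/
noncomputable def nsc {α : Type} (L : Language α) : ℕ :=
  sInf {n | ∃ M : NFA α (Fin n), M.accepts = L}

/-- The rank of a state of an NFA: the maximal length of a word accepted from that state. -/
noncomputable def rankOf {α σ : Type*} (M : NFA α σ) (q : σ) : ℕ :=
  sSup {n | ∃ w : List α, w.length = n ∧ (M.evalFrom {q} w ∩ M.accept).Nonempty}

namespace NFA

section General

variable {α σ τ : Type*} (M : NFA α σ)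

theorem mem_acceptsFrom_iff_exists {S : Set σ} {x : List α} :
    x ∈ M.acceptsFrom S ↔ ∃ s ∈ S, x ∈ M.acceptsFrom {s} := by
  simp only [mem_acceptsFrom, mem_evalFrom_iff_exists (S := S)]
  tauto

theorem acceptsFrom_mono {S T : Set σ} (h : S ⊆ T) : M.acceptsFrom S ≤ M.acceptsFrom T := by
  intro x hx
  obtain ⟨s, hs, hx⟩ := M.mem_acceptsFrom_iff_exists.1 hx
  exact M.mem_acceptsFrom_iff_exists.2 ⟨s, h hs, hx⟩

theorem append_mem_accepts {q : σ} {u x : List α} (hu : q ∈ M.eval u)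
    (hx : x ∈ M.acceptsFrom {q}) : u ++ x ∈ M.accepts := by
  rw [accepts_eq_acceptsFrom_start, append_mem_acceptsFrom]
  exact M.acceptsFrom_mono (Set.singleton_subset_iff.2 hu) hx

theorem mem_acceptsFrom_reverse {q : σ} {w : List α} :
    w ∈ M.reverse.acceptsFrom {q} ↔ q ∈ M.eval w.reverse := by
  simp [mem_acceptsFrom, ← Set.not_disjoint_iff, disjoint_evalFrom_reverse_iff, eval]

theorem accepts_reverse : M.reverse.accepts = M.accepts.reverse := by
  ext w
  simp [Language.mem_reverse]

/-- The state `t` stands for the set of states `E t` of `M`, as in the subset construction. -/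
def subsetNFA (E : τ → Set σ) : NFA α τ where
  step t a := {t' | E t' ⊆ M.stepSet (E t) a}
  start := {t | E t ⊆ M.start}
  accept := {t | ∃ s ∈ E t, s ∈ M.accept}

def Covers (E : τ → Set σ) (T : Set σ) : Prop :=
  ∀ w ∈ M.acceptsFrom T, ∃ t, E t ⊆ T ∧ w ∈ M.acceptsFrom (E t)

variable {M}

theorem Covers.of_forall_mem {E : τ → Set σ} {T : Set σ}
    (h : ∀ r ∈ T, ∀ w ∈ M.acceptsFrom {r}, ∃ t, r ∈ E t ∧ E t ⊆ T) : M.Covers E T := by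
  intro w hw
  obtain ⟨r, hr, hw⟩ := M.mem_acceptsFrom_iff_exists.1 hw
  obtain ⟨t, hrt, htT⟩ := h r hr w hw
  exact ⟨t, htT, M.acceptsFrom_mono (Set.singleton_subset_iff.2 hrt) hw⟩

theorem acceptsFrom_subsetNFA {E : τ → Set σ} (hE : ∀ t a, M.Covers E (M.stepSet (E t) a))
    (t : τ) : (M.subsetNFA E).acceptsFrom {t} = M.acceptsFrom (E t) := by
  ext w
  induction w generalizing t with
  | nil => simp [subsetNFA]
  | cons a w ih =>
    rw [cons_mem_acceptsFrom, cons_mem_acceptsFrom, stepSet_singleton,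
      mem_acceptsFrom_iff_exists]
    simp only [ih]
    constructor
    · rintro ⟨t', ht', hw⟩
      exact M.acceptsFrom_mono ht' hw
    · exact hE t a w

theorem accepts_subsetNFA {E : τ → Set σ} (hE : ∀ t a, M.Covers E (M.stepSet (E t) a))
    (hstart : M.Covers E M.start) : (M.subsetNFA E).accepts = M.accepts := by
  ext w
  rw [accepts_eq_acceptsFrom_start, accepts_eq_acceptsFrom_start, mem_acceptsFrom_iff_exists]
  simp only [acceptsFrom_subsetNFA hE]
  constructor
  · rintro ⟨t', ht', hw⟩
    exact M.acceptsFrom_mono ht' hw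
  · exact hstart w

theorem accepts_subsetNFA_singleton {f : τ → σ} (hf : f.Surjective) :
    (M.subsetNFA fun t => {f t}).accepts = M.accepts := by
  have hcov (T : Set σ) : M.Covers (fun t => {f t}) T :=
    Covers.of_forall_mem fun r hr _ _ => by
      obtain ⟨t, rfl⟩ := hf r
      exact ⟨t, rfl, Set.singleton_subset_iff.2 hr⟩
  exact accepts_subsetNFA (fun _ _ => hcov _) (hcov _)

section Rank

variable {M : NFA α σ}

theorem nonempty_evalFrom_inter_accept_iff {q : σ} {w : List α} :
    (M.evalFrom {q} w ∩ M.accept).Nonempty ↔ w ∈ M.acceptsFrom {q} := by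
  simp only [mem_acceptsFrom, Set.Nonempty, Set.mem_inter_iff]
  tauto

theorem rankOf_eq_of_forall_length_eq {q : σ} {x : List α} (hx : x ∈ M.acceptsFrom {q})
    (h : ∀ y ∈ M.acceptsFrom {q}, y.length = x.length) : rankOf M q = x.length := by
  have hset : {n | ∃ w : List α, w.length = n ∧ (M.evalFrom {q} w ∩ M.accept).Nonempty}
      = {x.length} := by
    ext n
    simp only [nonempty_evalFrom_inter_accept_iff, Set.mem_ofPred_eq, Set.mem_singleton_iff]
    exact ⟨fun ⟨y, hy, hyq⟩ => hy ▸ h y hyq, fun hn => ⟨x, hn.symm, hx⟩⟩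
  rw [rankOf, hset, csSup_singleton]

variable (M) in
def IsUseful (q : σ) : Prop := (∃ u, q ∈ M.eval u) ∧ ∃ x, x ∈ M.acceptsFrom {q}

variable (M) in
def IsTrim : Prop := ∀ q, M.IsUseful q

theorem mem_eval_append_singleton {q r : σ} {u : List α} {a : α} (hq : q ∈ M.eval u)
    (hr : r ∈ M.step q a) : r ∈ M.eval (u ++ [a]) := by
  rw [eval_append_singleton, mem_stepSet]
  exact ⟨q, hq, hr⟩

namespace IsTrim

variable {ℓ : ℕ} (hM : M.IsTrim) (hL : ∀ w ∈ M.accepts, w.length = ℓ)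
include hM hL

theorem rankOf_add_length {q : σ} {u : List α} (hu : q ∈ M.eval u) :
    rankOf M q + u.length = ℓ := by
  have hlen {y : List α} (hy : y ∈ M.acceptsFrom {q}) : u.length + y.length = ℓ := by
    simpa using hL _ (M.append_mem_accepts hu hy)
  obtain ⟨-, x, hx⟩ := hM q
  rw [rankOf_eq_of_forall_length_eq hx fun y hy => by have := hlen hy; have := hlen hx; omega]
  have := hlen hx
  omega

theorem rankOf_le (q : σ) : rankOf M q ≤ ℓ := by
  obtain ⟨⟨u, hu⟩, -⟩ := hM q
  have := hM.rankOf_add_length hL hu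
  omega

theorem rankOf_of_mem_start {q : σ} (hq : q ∈ M.start) : rankOf M q = ℓ := by
  simpa using hM.rankOf_add_length hL (u := []) hq

theorem rankOf_of_mem_step {q r : σ} {a : α} (hr : r ∈ M.step q a) :
    rankOf M r + 1 = rankOf M q := by
  obtain ⟨⟨u, hu⟩, -⟩ := hM q
  have hq := hM.rankOf_add_length hL hu
  have hr := hM.rankOf_add_length hL (mem_eval_append_singleton hu hr)
  simp only [List.length_append, List.length_singleton] at hr
  omega

theorem rankOf_reverse (q : σ) : rankOf M.reverse q = ℓ - rankOf M q := by
  obtain ⟨⟨u, hu⟩, -⟩ := hM q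
  have hu' : u.reverse ∈ M.reverse.acceptsFrom {q} := by
    rwa [mem_acceptsFrom_reverse, List.reverse_reverse]
  have hlen {y : List α} (hy : y ∈ M.reverse.acceptsFrom {q}) : rankOf M q + y.length = ℓ := by
    simpa using hM.rankOf_add_length hL (M.mem_acceptsFrom_reverse.1 hy)
  rw [rankOf_eq_of_forall_length_eq hu' fun y hy => by
    have := hlen hy; have := hlen hu'; omega]
  have := hlen hu'
  omega

end IsTrim

end Rank

end General

section Minimal

variable {α σ : Type} (M : NFA α σ)

def IsMinimal : Prop :=
  ∀ (τ : Type) [Finite τ] (N : NFA α τ), N.accepts = M.accepts → Nat.card σ ≤ Nat.card τ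

variable {M}

theorem IsMinimal.reverse (hM : M.IsMinimal) : M.reverse.IsMinimal := by
  intro τ _ N hN
  refine hM τ N.reverse ?_
  rw [accepts_reverse, hN, accepts_reverse, Language.reverse_reverse]

theorem IsMinimal.isTrim [Finite σ] (hM : M.IsMinimal) : M.IsTrim := by
  by_contra hM'
  obtain ⟨q₀, hq₀⟩ := not_forall.1 hM'
  have hcov {T : Set σ} (hT : ∀ r ∈ T, ∃ u, r ∈ M.eval u) :
      M.Covers (fun t : {q // M.IsUseful q} => {t.1}) T :=
    Covers.of_forall_mem fun r hr w hw =>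
      ⟨⟨r, hT r hr, w, hw⟩, rfl, Set.singleton_subset_iff.2 hr⟩
  have hN := accepts_subsetNFA (fun t a => hcov fun r hr => by
      obtain ⟨u, hu⟩ := t.2.1
      obtain ⟨q, rfl, hrq⟩ := mem_stepSet.1 hr
      exact ⟨u ++ [a], mem_eval_append_singleton hu hrq⟩)
    (hcov fun r hr => ⟨[], hr⟩)
  exact (hM _ _ hN).not_gt (Finite.card_subtype_lt hq₀)

theorem IsMinimal.ncard_le_card_of_cover [Finite σ] (hM : M.IsMinimal) {X : Type} [Finite X]
    (P : σ → Prop) (S : X → Set σ)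
    (hstart : ∀ r ∈ M.start, P r → ∃ x, r ∈ S x ∧ S x ⊆ M.start)
    (hstep : ∀ q a r, r ∈ M.step q a → P r → ∃ x, r ∈ S x ∧ S x ⊆ M.step q a) :
    {q | P q}.ncard ≤ Nat.card X := by
  let E : {q // ¬P q} ⊕ X → Set σ := Sum.elim (fun q => {q.1}) S
  have hcov {T : Set σ} (hT : ∀ r ∈ T, P r → ∃ x, r ∈ S x ∧ S x ⊆ T) : M.Covers E T := by
    refine Covers.of_forall_mem fun r hr _ _ => ?_
    by_cases hPr : P r
    · obtain ⟨x, hrx, hxT⟩ := hT r hr hPr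
      exact ⟨.inr x, hrx, hxT⟩
    · exact ⟨.inl ⟨r, hPr⟩, rfl, Set.singleton_subset_iff.2 hr⟩
  have hN := accepts_subsetNFA (fun t a => hcov fun r hr hPr => by
      obtain ⟨q, hq, hrq⟩ := mem_stepSet.1 hr
      obtain ⟨x, hrx, hxq⟩ := hstep q a r hrq hPr
      exact ⟨x, hrx, hxq.trans fun s hs => mem_stepSet.2 ⟨q, hq, hs⟩⟩)
    (hcov hstart)
  have hcard := hM _ _ hN
  rw [Nat.card_sum, ← Set.ncard_add_ncard_compl {q | P q}] at hcard
  have : Nat.card {q // ¬P q} = {q | P q}ᶜ.ncard := Nat.card_coe_set_eq _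
  omega

namespace IsMinimal

variable [Finite σ] {ℓ : ℕ} (hM : M.IsMinimal) (hL : ∀ w ∈ M.accepts, w.length = ℓ)
include hM hL

theorem ncard_rankOf_eq_le_one : {q | rankOf M q = ℓ}.ncard ≤ 1 := by
  have hT := hM.isTrim
  simpa using hM.ncard_le_card_of_cover (X := Unit) (fun q => rankOf M q = ℓ) (fun _ => M.start)
    (fun r hr _ => ⟨(), hr, le_rfl⟩)
    (fun q a r hr hrℓ => by
      have := hT.rankOf_of_mem_step hL hr
      have := hT.rankOf_le hL q
      omega)

theorem ncard_rankOf_eq_le_mul [Finite α] {i : ℕ} (hi : i < ℓ) :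
    {q | rankOf M q = i}.ncard ≤ {q | rankOf M q = i + 1}.ncard * Nat.card α := by
  have hT := hM.isTrim
  have := hM.ncard_le_card_of_cover (X := {q | rankOf M q = i + 1} × α) (fun q => rankOf M q = i)
    (fun x => M.step x.1 x.2)
    (fun r hr hri => by have := hT.rankOf_of_mem_start hL hr; omega)
    (fun q a r hr hri => ⟨(⟨q, by simp [← hT.rankOf_of_mem_step hL hr, hri]⟩, a), hr, le_rfl⟩)
  rwa [Nat.card_prod, Nat.card_coe_set_eq] at this

theorem ncard_rankOf_eq_le_pow_sub [Finite α] {i : ℕ} (hi : i ≤ ℓ) :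
    {q | rankOf M q = i}.ncard ≤ Nat.card α ^ (ℓ - i) := by
  induction hi using Nat.decreasingInduction with
  | self => simpa using hM.ncard_rankOf_eq_le_one hL
  | of_succ i hi ih =>
    calc {q | rankOf M q = i}.ncard
        ≤ {q | rankOf M q = i + 1}.ncard * Nat.card α := hM.ncard_rankOf_eq_le_mul hL hi
      _ ≤ Nat.card α ^ (ℓ - (i + 1)) * Nat.card α := Nat.mul_le_mul_right _ ih
      _ = Nat.card α ^ (ℓ - i) := by rw [← pow_succ]; congr 1; omega

theorem ncard_rankOf_eq_le_pow [Finite α] {i : ℕ} (hi : i ≤ ℓ) :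
    {q | rankOf M q = i}.ncard ≤ Nat.card α ^ i := by
  have hT := hM.isTrim
  have hLrev : ∀ w ∈ M.reverse.accepts, w.length = ℓ := fun w hw => by
    simpa using hL _ (mem_accepts_reverse.1 hw)
  have hset : {q | rankOf M q = i} = {q | rankOf M.reverse q = ℓ - i} := by
    ext q
    have := hT.rankOf_le hL q
    simp only [Set.mem_ofPred_eq, hT.rankOf_reverse hL]
    omega
  rw [hset]
  simpa [Nat.sub_sub_self hi] using hM.reverse.ncard_rankOf_eq_le_pow_sub hLrev (Nat.sub_le ℓ i)

theorem card_le_sum_pow_min [Finite α] :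
    Nat.card σ ≤ ∑ i ∈ Finset.range (ℓ + 1), Nat.card α ^ min i (ℓ - i) := by
  have hT := hM.isTrim
  classical
  have := Fintype.ofFinite σ
  rw [Nat.card_eq_fintype_card, ← Finset.card_univ, Finset.card_eq_sum_card_fiberwise
    (f := rankOf M) (t := Finset.range (ℓ + 1))
    fun q _ => Finset.mem_range.2 (Nat.lt_succ_of_le (hT.rankOf_le hL q))]
  refine Finset.sum_le_sum fun i hi => ?_
  have hi : i ≤ ℓ := Nat.le_of_lt_succ (Finset.mem_range.1 hi)
  rw [← Set.ncard_coe_finset, Finset.coe_filter]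
  rcases min_choice i (ℓ - i) with h | h <;> rw [h]
  · simpa using hM.ncard_rankOf_eq_le_pow hL hi
  · simpa using hM.ncard_rankOf_eq_le_pow_sub hL hi

end IsMinimal

end Minimal

end NFA

theorem Language.isRegular_of_forall_length_le {α : Type*} [Finite α] {L : Language α} {ℓ : ℕ}
    (hL : ∀ w ∈ L, w.length ≤ ℓ) : L.IsRegular := by
  refine Language.IsRegular.of_finite_range_leftQuotient
    ((List.finite_length_le α ℓ).finite_subsets.subset ?_)
  rintro _ ⟨u, rfl⟩ v hv
  have := hL _ hv
  simp only [List.length_append] at this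
  exact (Nat.le_add_left _ _).trans this

theorem exists_nfa_fin_nsc {α : Type} {L : Language α} (hL : L.IsRegular) :
    ∃ M : NFA α (Fin (nsc L)), M.accepts = L := by
  refine Nat.sInf_mem (s := {n | ∃ M : NFA α (Fin n), M.accepts = L}) ?_
  obtain ⟨σ, _, D, rfl⟩ := hL
  let e := Fintype.equivFin σ
  exact ⟨_, D.toNFA.subsetNFA fun i => {e.symm i},
    by rw [NFA.accepts_subsetNFA_singleton e.symm.surjective, DFA.toNFA_correct]⟩

theorem NFA.isMinimal_of_card_eq_nsc {α σ : Type} (M : NFA α σ) (h : Nat.card σ = nsc M.accepts) :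
    M.IsMinimal := by
  intro τ _ N hN
  let e := Finite.equivFin τ
  rw [h, nsc]
  exact Nat.sInf_le ⟨N.subsetNFA fun i => {e.symm i},
    by rw [NFA.accepts_subsetNFA_singleton e.symm.surjective, hN]⟩

theorem sum_range_pow_min (k ℓ : ℕ) :
    ∑ i ∈ Finset.range (ℓ + 1), k ^ min i (ℓ - i) =
      ∑ i ∈ Finset.range ((ℓ + 1) / 2), k ^ i + ∑ i ∈ Finset.range (ℓ / 2 + 1), k ^ i := by
  have hsplit : ℓ + 1 = (ℓ + 1) / 2 + (ℓ / 2 + 1) := by omega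
  conv_lhs => rw [hsplit, Finset.sum_range_add]
  rw [← Finset.sum_range_reflect (fun i => k ^ i) (ℓ / 2 + 1)]
  congr 1 <;> refine Finset.sum_congr rfl fun i hi => ?_ <;> rw [Finset.mem_range] at hi <;>
    congr 1 <;> omega

theorem stmt4_general (k ℓ : ℕ) (hk : 2 ≤ k)
    {α : Type} [Fintype α] (hcard : Fintype.card α = k)
    (L : Language α) (hL : ∀ w ∈ L, w.length = ℓ) :
    (∀ (σ : Type) [Fintype σ] (M : NFA α σ), M.accepts = L →
      Fintype.card σ = nsc L →
      ∀ i ≤ ℓ, {q : σ | rankOf M q = i}.ncard ≤ min (k ^ (ℓ - i)) (k ^ i)) ∧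
    (ℓ % 2 = 0 → nsc L ≤ 2 * ((k ^ (ℓ / 2) - 1) / (k - 1)) + k ^ (ℓ / 2)) ∧
    (ℓ % 2 = 1 → nsc L ≤ 2 * ((k ^ ((ℓ + 1) / 2) - 1) / (k - 1))) := by
  rw [← Nat.card_eq_fintype_card] at hcard
  subst hcard
  obtain ⟨M₀, hM₀⟩ := exists_nfa_fin_nsc
    (Language.isRegular_of_forall_length_le fun w hw => (hL w hw).le)
  have hsum :=
    (M₀.isMinimal_of_card_eq_nsc (by rw [Nat.card_fin, hM₀])).card_le_sum_pow_min (hM₀ ▸ hL)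
  rw [Nat.card_fin, sum_range_pow_min] at hsum
  refine ⟨fun σ _ M hM hσ i hi => ?_, fun heven => ?_, fun hodd => ?_⟩
  · have hminM := M.isMinimal_of_card_eq_nsc (by rw [Nat.card_eq_fintype_card, hσ, hM])
    exact le_min (hminM.ncard_rankOf_eq_le_pow_sub (hM ▸ hL) hi)
      (hminM.ncard_rankOf_eq_le_pow (hM ▸ hL) hi)
  · rw [show (ℓ + 1) / 2 = ℓ / 2 by omega, Finset.sum_range_succ, Nat.geomSum_eq hk] at hsum
    omega
  · rw [show ℓ / 2 + 1 = (ℓ + 1) / 2 by omega, Nat.geomSum_eq hk] at hsum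
    omega

theorem stmt4 (k ℓ : ℕ) (hk : 2 ≤ k) (hℓ : 0 < ℓ)
    {α : Type} [Fintype α] (hcard : Fintype.card α = k)
    (L : Language α) (hL : ∀ w ∈ L, w.length = ℓ) :
    (∀ (σ : Type) [Fintype σ] (M : NFA α σ), M.accepts = L →
      Fintype.card σ = nsc L →
      ∀ i ≤ ℓ, {q : σ | rankOf M q = i}.ncard ≤ min (k ^ (ℓ - i)) (k ^ i)) ∧
    (ℓ % 2 = 0 → nsc L ≤ 2 * ((k ^ (ℓ / 2) - 1) / (k - 1)) + k ^ (ℓ / 2)) ∧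
    (ℓ % 2 = 1 → nsc L ≤ 2 * ((k ^ ((ℓ + 1) / 2) - 1) / (k - 1))) :=
  stmt4_general k ℓ hk hcard L hL
end

section
/- Let L ⊆ Σ^ℓ be a block language with bitmap b ∈ {0,1}^(k^ℓ), where bit b_j = 1 iff the j-th word of Σ^ℓ in lexicographic order belongs to L. For each i ∈ [0,ℓ] and j ∈ [0, k^(ℓ−i)−1], the segment b_{jk^i} ⋯ b_{(j+1)k^i − 1} equals the bitmap of the quotient language w⁻¹L, where w is the word of Σ^(ℓ−i) with lexicographic index j. -/
/-- Left quotient of a language by a word. -/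
def leftQuot {α : Type*} (w : List α) (L : Set (List α)) : Set (List α) :=
  {x | w ++ x ∈ L}

/-- The word of `(Fin k)^n` whose lexicographic index is `j`
(most significant digit first, base-`k` representation of `j` with `n` digits). -/
def wordOf (k : ℕ) (hk : 0 < k) : ℕ → ℕ → List (Fin k)
  | 0, _ => []
  | n + 1, j => wordOf k hk n (j / k) ++ [⟨j % k, Nat.mod_lt j hk⟩]

/-- The `j`-th bit of the bitmap of a block language `L ⊆ (Fin k)^n`:
it holds iff the `j`-th word of `(Fin k)^n` in lexicographic order belongs to `L`. -/
def bm (k : ℕ) (hk : 0 < k) (n : ℕ) (L : Set (List (Fin k))) (j : ℕ) : Prop :=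
  wordOf k hk n j ∈ L

lemma wordOf_split (k : ℕ) (hk : 0 < k) (m i j t : ℕ) (ht : t < k ^ i) :
    wordOf k hk (m + i) (j * k ^ i + t) = wordOf k hk m j ++ wordOf k hk i t := by
  induction i generalizing t with
  | zero =>
      have : t = 0 := by simpa using ht
      subst this
      simp [wordOf]
  | succ i ih =>
      have h1 : (j * k ^ (i + 1) + t) / k = j * k ^ i + t / k := by
        rw [pow_succ, show j * (k ^ i * k) + t = k * (j * k ^ i) + t by ring,
          Nat.mul_add_div hk]
      have h2 : (j * k ^ (i + 1) + t) % k = t % k := by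
        rw [pow_succ, show j * (k ^ i * k) + t = t + (j * k ^ i) * k by ring,
          Nat.add_mul_mod_self_right]
      have h3 : t / k < k ^ i := Nat.div_lt_of_lt_mul (by rwa [pow_succ, mul_comm] at ht)
      have h4 : (⟨(j * k ^ (i + 1) + t) % k, Nat.mod_lt _ hk⟩ : Fin k)
          = ⟨t % k, Nat.mod_lt _ hk⟩ := Fin.ext h2
      show wordOf k hk (m + i) _ ++ _ = _
      rw [h1, h4, ih _ h3]
      simp [wordOf]

theorem stmt8 (k ℓ : ℕ) (hk : 2 ≤ k) (hℓ : 0 < ℓ)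
    (L : Set (List (Fin k))) (hL : ∀ w ∈ L, w.length = ℓ)
    (i : ℕ) (hi : i ≤ ℓ) (j : ℕ) (hj : j < k ^ (ℓ - i)) (t : ℕ) (ht : t < k ^ i) :
    bm k (by omega) ℓ L (j * k ^ i + t) ↔
      bm k (by omega) i (leftQuot (wordOf k (by omega) (ℓ - i) j) L) t := by
  have hk0 : 0 < k := by omega
  have := wordOf_split k hk0 (ℓ - i) i j t ht
  rw [show ℓ - i + i = ℓ by omega] at this
  unfold bm leftQuot
  rw [this]
  rfl
end

section
/- Let ℓ > 0 and Σ = {a,b}. For L_ℓ = Σ^ℓ (all words of length ℓ) and w = a^ℓ: dsc(L_ℓ) = ℓ + 2 and dsc(L_ℓ ∖ {w}) = 2ℓ + 1. -/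
/-!
By the Myhill–Nerode theorem the minimal complete DFA of `L` has exactly one state per left
quotient `w⁻¹L = {y | w ++ y ∈ L}`, so `dsc L` is the number of distinct left quotients.
For `L = Σ^ℓ` these are `Σ^r` (`r ≤ ℓ`) and `∅`. For `L = Σ^ℓ \ {a^ℓ}` they are `∅`, the
quotients `Σ^r` (`r < ℓ`) by words containing a letter other than `a`, and the quotients
`Σ^r \ {a^r}` (`1 ≤ r ≤ ℓ`) by the words `a^(ℓ - r)`; a second letter `b ≠ a` keeps them apart.
-/

noncomputable def dsc {α : Type} (L : Set (List α)) : ℕ :=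
  sInf {n | ∃ M : DFA α (Fin n), M.accepts = L}

open Function List

variable {α : Type}

theorem natCard_range_leftQuotient_accepts_le {σ : Type*} [Finite σ] (M : DFA α σ) :
    Nat.card (Set.range M.accepts.leftQuotient) ≤ Nat.card σ := by
  rw [Language.leftQuotient_accepts]
  exact (Nat.card_mono (Set.finite_range _) (Set.range_comp_subset_range _ _)).trans
    (Finite.card_range_le _)

theorem dsc_eq_natCard_range_leftQuotient (L : Set (List α)) :
    dsc L = Nat.card (Set.range fun w : List α => (w ++ ·) ⁻¹' L) := by
  change dsc L = Nat.card (Set.range (Language.leftQuotient L))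
  by_cases hfin : (Set.range (Language.leftQuotient L)).Finite
  · have := hfin.to_subtype
    have hmin : ∃ M : DFA α (Fin (Nat.card (Set.range (Language.leftQuotient L)))),
        M.accepts = L :=
      ⟨(Language.toDFA L).reindex (Finite.equivFin _),
        (DFA.accepts_reindex _ _).trans (Language.accepts_toDFA L)⟩
    refine le_antisymm (Nat.sInf_le hmin) (le_csInf ⟨_, hmin⟩ ?_)
    rintro n ⟨M, rfl⟩
    simpa using natCard_range_leftQuotient_accepts_le M
  · -- `L` is not regular: both sides are junk `0` (`sInf ∅` and `Nat.card` of an infinite type)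
    have hnone : {n | ∃ M : DFA α (Fin n), M.accepts = L} = ∅ := by
      refine Set.eq_empty_of_forall_notMem fun n ⟨M, hM⟩ => hfin ?_
      exact Language.IsRegular.finite_range_leftQuotient ⟨Fin n, inferInstance, M, hM⟩
    unfold dsc
    rw [hnone, Nat.sInf_empty, Set.Infinite.card_eq_zero hfin]

theorem natCard_range_eq_of_injective {β γ ι : Type*} {f : β → γ} {q : ι → γ}
    (hq : Injective q) (hf : ∀ x, ∃ i, f x = q i) (hq' : ∀ i, ∃ x, f x = q i) :
    Nat.card (Set.range f) = Nat.card ι := by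
  have hrange : Set.range f = Set.range q := by
    ext y
    constructor
    · rintro ⟨x, rfl⟩
      obtain ⟨i, hi⟩ := hf x
      exact ⟨i, hi.symm⟩
    · rintro ⟨i, rfl⟩
      exact hq' i
  rw [hrange, Nat.card_range_of_injective hq]

theorem replicate_mem_setOf_length_eq (n : ℕ) (a : α) :
    replicate n a ∈ {y : List α | y.length = n} :=
  length_replicate

theorem nonempty_setOf_length_eq [Nonempty α] (n : ℕ) : {y : List α | y.length = n}.Nonempty :=
  ⟨_, replicate_mem_setOf_length_eq n (Classical.arbitrary α)⟩

theorem injective_setOf_length_eq [Nonempty α] :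
    Injective fun n : ℕ => {y : List α | y.length = n} := by
  intro m n h
  simpa using (Set.ext_iff.mp h (replicate m (Classical.arbitrary α))).mp length_replicate

theorem preimage_append_setOf_length_eq (n : ℕ) (w : List α) :
    (w ++ ·) ⁻¹' {x | x.length = n} =
      if w.length ≤ n then {y | y.length = n - w.length} else ∅ := by
  ext y
  split_ifs <;> simp <;> omega

theorem natCard_range_preimage_append_setOf_length_eq [Nonempty α] (n : ℕ) :
    Nat.card (Set.range fun w : List α => (w ++ ·) ⁻¹' {x | x.length = n}) = n + 2 := by
  let q : Option (Fin (n + 1)) → Set (List α) := fun o => o.elim ∅ fun r => {y | y.length = r}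
  have hq : Injective q := by
    rintro (_ | r) (_ | s) h
    · rfl
    · exact absurd h.symm (nonempty_setOf_length_eq s).ne_empty
    · exact absurd h (nonempty_setOf_length_eq r).ne_empty
    · exact congrArg some (Fin.ext (injective_setOf_length_eq h))
  rw [natCard_range_eq_of_injective hq, Nat.card_eq_fintype_card, Fintype.card_option,
    Fintype.card_fin]
  · intro w
    rw [preimage_append_setOf_length_eq]
    split_ifs
    · exact ⟨some ⟨n - w.length, by omega⟩, rfl⟩
    · exact ⟨none, rfl⟩
  · let a := Classical.arbitrary α
    rintro (_ | r)
    · refine ⟨replicate (n + 1) a, ?_⟩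
      rw [preimage_append_setOf_length_eq, if_neg (by simp)]
      rfl
    · refine ⟨replicate (n - r) a, ?_⟩
      rw [preimage_append_setOf_length_eq, if_pos (by simp), length_replicate,
        Nat.sub_sub_self r.is_le]
      rfl

theorem preimage_append_setOf_length_eq_diff_replicate [DecidableEq α] (a : α) (n : ℕ)
    (w : List α) :
    (w ++ ·) ⁻¹' ({x | x.length = n} \ {replicate n a}) =
      if n < w.length then ∅
      else if w = replicate w.length a then
        {y | y.length = n - w.length} \ {replicate (n - w.length) a}
      else {y | y.length = n - w.length} := by
  ext y
  split_ifs <;> grind [append_eq_replicate_iff]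

theorem cons_replicate_mem_setOf_length_eq_diff_replicate {a b : α} (hab : a ≠ b) (r : ℕ) :
    b :: replicate r a ∈ {y : List α | y.length = r + 1} \ {replicate (r + 1) a} := by
  simp [replicate_succ, hab.symm]

theorem replicate_notMem_setOf_length_eq_diff_replicate (a : α) (r s : ℕ) :
    replicate r a ∉ {y : List α | y.length = s} \ {replicate s a} := by
  simp +contextual

/-- The left quotients of `Σ^n \ {a^n}`: `none` is the sink `∅`, `inl r` is `Σ^r` (reached by
a word of length `n - r` other than `a^(n-r)`), and `inr r` is `Σ^(r+1) \ {a^(r+1)}` (reached by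
`a^(n-r-1)`). -/
def diffReplicateQuotient (a : α) (n : ℕ) : Option (Fin n ⊕ Fin n) → Set (List α)
  | none => ∅
  | some (.inl r) => {y | y.length = r}
  | some (.inr r) => {y | y.length = r + 1} \ {replicate (r + 1) a}

theorem injective_diffReplicateQuotient {a b : α} (hab : a ≠ b) (n : ℕ) :
    Injective (diffReplicateQuotient a n) := by
  have : Nonempty α := ⟨a⟩
  have hmem (r : ℕ) := cons_replicate_mem_setOf_length_eq_diff_replicate hab r
  rintro (_ | r | r) (_ | s | s) h <;> have h' := Set.ext_iff.mp h
  · rfl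
  · exact absurd h.symm (nonempty_setOf_length_eq s).ne_empty
  · exact absurd h.symm (Set.nonempty_of_mem (hmem s)).ne_empty
  · exact absurd h (nonempty_setOf_length_eq r).ne_empty
  · exact congrArg (some ∘ Sum.inl) (Fin.ext (injective_setOf_length_eq h))
  · exact (replicate_notMem_setOf_length_eq_diff_replicate a r (s + 1)
      ((h' _).1 (replicate_mem_setOf_length_eq r a))).elim
  · exact absurd h (Set.nonempty_of_mem (hmem r)).ne_empty
  · exact (replicate_notMem_setOf_length_eq_diff_replicate a s (r + 1)
      ((h' _).2 (replicate_mem_setOf_length_eq s a))).elim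
  · have hlen := ((h' _).1 (hmem r)).1
    simp only [Set.mem_ofPred_eq, length_cons, length_replicate, add_left_inj] at hlen
    exact congrArg (some ∘ Sum.inr) (Fin.ext hlen)

theorem natCard_range_preimage_append_setOf_length_eq_diff_replicate {a b : α} (hab : a ≠ b)
    (n : ℕ) :
    Nat.card (Set.range fun w : List α =>
      (w ++ ·) ⁻¹' ({x | x.length = n} \ {replicate n a})) = 2 * n + 1 := by
  classical
  rw [natCard_range_eq_of_injective (injective_diffReplicateQuotient hab n),
    Nat.card_eq_fintype_card, Fintype.card_option, Fintype.card_sum, Fintype.card_fin]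
  · omega
  · intro w
    rw [preimage_append_setOf_length_eq_diff_replicate]
    split_ifs with hlong hpure
    · exact ⟨none, rfl⟩
    · obtain hn | hn := eq_or_ne w.length n
      · exact ⟨none, by simp [hn, diffReplicateQuotient]⟩
      · obtain ⟨k, hk⟩ : ∃ k, n - w.length = k + 1 := ⟨n - w.length - 1, by omega⟩
        rw [hk]
        exact ⟨some (.inr ⟨k, by omega⟩), rfl⟩
    · have : 0 < w.length := length_pos_iff.mpr fun h => hpure (by simp [h])
      exact ⟨some (.inl ⟨n - w.length, by omega⟩), rfl⟩
  · rintro (_ | r | r)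
    · exact ⟨replicate (n + 1) a,
        (preimage_append_setOf_length_eq_diff_replicate a n _).trans (if_pos (by simp))⟩
    · refine ⟨b :: replicate (n - r - 1) a, ?_⟩
      rw [preimage_append_setOf_length_eq_diff_replicate, if_neg (by simp; omega),
        if_neg (by simp [replicate_succ, hab.symm]), length_cons, length_replicate,
        show n - (n - r - 1 + 1) = r by omega]
      rfl
    · refine ⟨replicate (n - r - 1) a, ?_⟩
      rw [preimage_append_setOf_length_eq_diff_replicate, if_neg (by simp; omega),
        if_pos (by simp), length_replicate, show n - (n - r - 1) = r + 1 by omega]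
      rfl

theorem stmt11_general (ℓ : ℕ) :
    dsc {w : List (Fin 2) | w.length = ℓ} = ℓ + 2 ∧
    dsc ({w : List (Fin 2) | w.length = ℓ} \ {List.replicate ℓ (0 : Fin 2)}) = 2 * ℓ + 1 := by
  rw [dsc_eq_natCard_range_leftQuotient, dsc_eq_natCard_range_leftQuotient]
  exact ⟨natCard_range_preimage_append_setOf_length_eq ℓ,
    natCard_range_preimage_append_setOf_length_eq_diff_replicate Fin.zero_ne_one ℓ⟩

theorem stmt11 (ℓ : ℕ) (hℓ : 0 < ℓ) :
    dsc {w : List (Fin 2) | w.length = ℓ} = ℓ + 2 ∧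
    dsc ({w : List (Fin 2) | w.length = ℓ} \ {List.replicate ℓ (0 : Fin 2)}) = 2 * ℓ + 1 :=
  stmt11_general ℓ
end

section
/- Let ℓ > 0 and Σ = {a,b,c}. For L₁ = (a+c)^ℓ and L₂ = (b+c)^ℓ: dsc(L₁) = dsc(L₂) = ℓ + 2, and dsc(L₁ ∪ L₂) = 3ℓ. -/
open Function Language List

section

variable {α : Type}

theorem dsc_eq_card_range_leftQuotient {L : Language α}
    (hL : (Set.range L.leftQuotient).Finite) :
    dsc L = Nat.card (Set.range L.leftQuotient) := by
  have := hL.fintype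
  apply le_antisymm
  · rw [Nat.card_eq_fintype_card]
    exact Nat.sInf_le ⟨DFA.reindex (Fintype.equivFin _) L.toDFA, by simp⟩
  · refine le_csInf ⟨_, DFA.reindex (Fintype.equivFin _) L.toDFA, by simp⟩ ?_
    rintro n ⟨M, rfl⟩
    calc Nat.card (Set.range M.accepts.leftQuotient)
        ≤ Nat.card (Set.range M.acceptsFrom) := by
          rw [leftQuotient_accepts]
          exact Nat.card_mono (Set.toFinite _) (Set.range_comp_subset_range _ _)
      _ ≤ n := by simpa using Finite.card_range_le M.acceptsFrom

theorem dsc_eq_card_of_range_leftQuotient_eq {σ : Type} [Finite σ] {L : Language α}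
    (Q : σ → Language α) (hQ : Injective Q) (hL : Set.range L.leftQuotient = Set.range Q) :
    dsc L = Nat.card σ := by
  rw [dsc_eq_card_range_leftQuotient (hL ▸ Set.finite_range Q), hL,
    Nat.card_range_of_injective hQ]

theorem leftQuotient_add (L₁ L₂ : Language α) (u : List α) :
    (L₁ + L₂).leftQuotient u = L₁.leftQuotient u + L₂.leftQuotient u := rfl

def wordsOfLength (p : α → Prop) (m : ℕ) : Language α :=
  {w | w.length = m ∧ ∀ s ∈ w, p s}

variable {p q : α → Prop} {a b c : α}

theorem mem_wordsOfLength {m : ℕ} {w : List α} :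
    w ∈ wordsOfLength p m ↔ w.length = m ∧ ∀ s ∈ w, p s := Iff.rfl

theorem wordsOfLength_zero : wordsOfLength p 0 = 1 := by
  ext w
  simp +contextual [mem_wordsOfLength, mem_one, length_eq_zero_iff]

theorem leftQuotient_wordsOfLength {m : ℕ} {u : List α} (hu : ∀ s ∈ u, p s)
    (hlen : u.length ≤ m) :
    (wordsOfLength p m).leftQuotient u = wordsOfLength p (m - u.length) := by
  ext v
  simp only [mem_leftQuotient, mem_wordsOfLength, length_append, mem_append]
  grind

theorem leftQuotient_wordsOfLength_eq_zero {m : ℕ} {u : List α}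
    (hu : ¬((∀ s ∈ u, p s) ∧ u.length ≤ m)) : (wordsOfLength p m).leftQuotient u = 0 := by
  ext v
  simp only [mem_leftQuotient, mem_wordsOfLength, length_append, mem_append, notMem_zero,
    iff_false]
  grind

theorem replicate_mem_wordsOfLength (hc : p c) {k m : ℕ} :
    replicate k c ∈ wordsOfLength p m ↔ k = m := by
  simp only [mem_wordsOfLength, length_replicate, mem_replicate]
  grind

theorem cons_replicate_mem_wordsOfLength (hc : p c) {k m : ℕ} :
    a :: replicate k c ∈ wordsOfLength p m ↔ p a ∧ k + 1 = m := by
  simp only [mem_wordsOfLength, length_cons, length_replicate, forall_mem_cons, mem_replicate]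
  grind

theorem wordsOfLength_ne_zero (hc : p c) (m : ℕ) : wordsOfLength p m ≠ 0 := fun h =>
  notMem_zero (replicate m c) (h ▸ (replicate_mem_wordsOfLength hc).mpr rfl)

theorem wordsOfLength_injective (hc : p c) : Injective (wordsOfLength p) := fun _ _ h =>
  (replicate_mem_wordsOfLength hc).mp (h ▸ (replicate_mem_wordsOfLength hc).mpr rfl)

theorem range_leftQuotient_wordsOfLength (hc : p c) (hb : ¬p b) (m : ℕ) :
    Set.range (wordsOfLength p m).leftQuotient =
      Set.range fun o : Option (Fin (m + 1)) => o.elim 0 fun k => wordsOfLength p k := by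
  ext K
  constructor
  · rintro ⟨u, rfl⟩
    by_cases hu : (∀ s ∈ u, p s) ∧ u.length ≤ m
    · exact ⟨some ⟨m - u.length, by omega⟩, (leftQuotient_wordsOfLength hu.1 hu.2).symm⟩
    · exact ⟨none, (leftQuotient_wordsOfLength_eq_zero hu).symm⟩
  · rintro ⟨_ | k, rfl⟩
    · exact ⟨[b], leftQuotient_wordsOfLength_eq_zero (by simp [hb])⟩
    · refine ⟨replicate (m - k) c, ?_⟩
      rw [leftQuotient_wordsOfLength (by simp [mem_replicate, hc]) (by simp)]
      simp only [length_replicate, Option.elim_some]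
      congr 1
      omega

theorem dsc_wordsOfLength (hc : p c) (hb : ¬p b) (m : ℕ) :
    dsc (wordsOfLength p m) = m + 2 := by
  rw [dsc_eq_card_of_range_leftQuotient_eq _ ?_ (range_leftQuotient_wordsOfLength hc hb m)]
  · simp
  · rintro (_ | k) (_ | k') h
    · rfl
    · exact absurd h.symm (wordsOfLength_ne_zero hc _)
    · exact absurd h (wordsOfLength_ne_zero hc _)
    · exact congrArg some (Fin.ext (wordsOfLength_injective hc h))

def unionQuotient (p q : α → Prop) (ℓ : ℕ) :
    Option (Fin (ℓ + 1)) ⊕ Fin (ℓ - 1) ⊕ Fin (ℓ - 1) → Language α :=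
  Sum.elim (fun o => o.elim 0 fun k => wordsOfLength p k + wordsOfLength q k)
    (Sum.elim (fun j => wordsOfLength p (j + 1)) fun j => wordsOfLength q (j + 1))

theorem unionQuotient_injective (ha : p a) (ha' : ¬q a) (hb : q b) (hb' : ¬p b)
    (hcp : p c) (hcq : q c) (ℓ : ℕ) : Injective (unionQuotient p q ℓ) := by
  intro x y h
  -- Equal values are told apart by the test words `cⁿ`, `a cⁿ⁻¹`, `b cⁿ⁻¹` at either length.
  have mem : ∀ w, w ∈ unionQuotient p q ℓ x ↔ w ∈ unionQuotient p q ℓ y := fun w => by rw [h]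
  let len : Option (Fin (ℓ + 1)) ⊕ Fin (ℓ - 1) ⊕ Fin (ℓ - 1) → ℕ :=
    Sum.elim (fun o => o.elim 0 (↑)) (Sum.elim (↑· + 1) (↑· + 1))
  have h1 := mem (replicate (len x) c)
  have h2 := mem (replicate (len y) c)
  have h3 := mem (a :: replicate (len x - 1) c)
  have h4 := mem (a :: replicate (len y - 1) c)
  have h5 := mem (b :: replicate (len x - 1) c)
  have h6 := mem (b :: replicate (len y - 1) c)
  rcases x with (_ | k) | j | j <;> rcases y with (_ | k') | j' | j' <;>
    simp only [unionQuotient, len, mem_add, Sum.elim_inl, Sum.elim_inr, Option.elim_none,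
      Option.elim_some, notMem_zero, replicate_mem_wordsOfLength hcp,
      replicate_mem_wordsOfLength hcq, cons_replicate_mem_wordsOfLength hcp,
      cons_replicate_mem_wordsOfLength hcq] at h1 h2 h3 h4 h5 h6 ⊢ <;>
    grind

theorem leftQuotient_add_wordsOfLength_mem_range (ℓ : ℕ) (u : List α) :
    (wordsOfLength p ℓ + wordsOfLength q ℓ).leftQuotient u ∈ Set.range (unionQuotient p q ℓ) := by
  rw [leftQuotient_add]
  by_cases hp : (∀ s ∈ u, p s) ∧ u.length ≤ ℓ <;> by_cases hq : (∀ s ∈ u, q s) ∧ u.length ≤ ℓ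
  · rw [leftQuotient_wordsOfLength hp.1 hp.2, leftQuotient_wordsOfLength hq.1 hq.2]
    exact ⟨.inl (some ⟨ℓ - u.length, by omega⟩), rfl⟩
  · rw [leftQuotient_wordsOfLength hp.1 hp.2, leftQuotient_wordsOfLength_eq_zero hq, add_zero]
    have := length_pos_of_ne_nil (show u ≠ [] by rintro rfl; exact hq (by simp))
    rcases Nat.eq_zero_or_pos (ℓ - u.length) with hk | hk
    · exact ⟨.inl (some 0), by simp [unionQuotient, hk, wordsOfLength_zero]⟩
    · refine ⟨.inr (.inl ⟨ℓ - u.length - 1, by omega⟩), ?_⟩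
      simp only [unionQuotient, Sum.elim_inr, Sum.elim_inl]
      congr 1
      omega
  · rw [leftQuotient_wordsOfLength_eq_zero hp, leftQuotient_wordsOfLength hq.1 hq.2, zero_add]
    have := length_pos_of_ne_nil (show u ≠ [] by rintro rfl; exact hp (by simp))
    rcases Nat.eq_zero_or_pos (ℓ - u.length) with hk | hk
    · exact ⟨.inl (some 0), by simp [unionQuotient, hk, wordsOfLength_zero]⟩
    · refine ⟨.inr (.inr ⟨ℓ - u.length - 1, by omega⟩), ?_⟩
      simp only [unionQuotient, Sum.elim_inr]
      congr 1
      omega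
  · rw [leftQuotient_wordsOfLength_eq_zero hp, leftQuotient_wordsOfLength_eq_zero hq]
    exact ⟨.inl none, (add_zero 0).symm⟩

theorem unionQuotient_mem_range_leftQuotient (ha : p a) (ha' : ¬q a) (hb : q b) (hb' : ¬p b)
    (hcp : p c) (hcq : q c) (ℓ : ℕ) (x : Option (Fin (ℓ + 1)) ⊕ Fin (ℓ - 1) ⊕ Fin (ℓ - 1)) :
    unionQuotient p q ℓ x ∈ Set.range (wordsOfLength p ℓ + wordsOfLength q ℓ).leftQuotient := by
  rcases x with (_ | k) | j | j
  · refine ⟨[a, b], ?_⟩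
    rw [leftQuotient_add, leftQuotient_wordsOfLength_eq_zero (by simp [hb']),
      leftQuotient_wordsOfLength_eq_zero (by simp [ha']), add_zero]
    rfl
  · refine ⟨replicate (ℓ - k) c, ?_⟩
    rw [leftQuotient_add, leftQuotient_wordsOfLength (by simp [mem_replicate, hcp]) (by simp),
      leftQuotient_wordsOfLength (by simp [mem_replicate, hcq]) (by simp)]
    simp only [length_replicate, Nat.sub_sub_self k.is_le]
    rfl
  · refine ⟨a :: replicate (ℓ - j - 2) c, ?_⟩
    rw [leftQuotient_add,
      leftQuotient_wordsOfLength (by simp [mem_replicate, ha, hcp]) (by simp; omega),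
      leftQuotient_wordsOfLength_eq_zero (by simp [ha']), add_zero]
    simp only [length_cons, length_replicate]
    congr 1
    omega
  · refine ⟨b :: replicate (ℓ - j - 2) c, ?_⟩
    rw [leftQuotient_add, leftQuotient_wordsOfLength_eq_zero (by simp [hb']),
      leftQuotient_wordsOfLength (by simp [mem_replicate, hb, hcq]) (by simp; omega), zero_add]
    simp only [length_cons, length_replicate]
    congr 1
    omega

theorem dsc_add_wordsOfLength (ha : p a) (ha' : ¬q a) (hb : q b) (hb' : ¬p b)
    (hcp : p c) (hcq : q c) {ℓ : ℕ} (hℓ : 0 < ℓ) :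
    dsc (wordsOfLength p ℓ + wordsOfLength q ℓ) = 3 * ℓ := by
  have hrange : Set.range (wordsOfLength p ℓ + wordsOfLength q ℓ).leftQuotient =
      Set.range (unionQuotient p q ℓ) :=
    subset_antisymm (Set.range_subset_iff.mpr (leftQuotient_add_wordsOfLength_mem_range ℓ))
      (Set.range_subset_iff.mpr (unionQuotient_mem_range_leftQuotient ha ha' hb hb' hcp hcq ℓ))
  rw [dsc_eq_card_of_range_leftQuotient_eq _ (unionQuotient_injective ha ha' hb hb' hcp hcq ℓ)
    hrange]
  simp only [Nat.card_eq_fintype_card, Fintype.card_sum, Fintype.card_option, Fintype.card_fin]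
  omega

end

theorem stmt15 (ℓ : ℕ) (hℓ : 0 < ℓ) :
    dsc {w : List (Fin 3) | w.length = ℓ ∧ ∀ s ∈ w, s = 0 ∨ s = 2} = ℓ + 2 ∧
    dsc {w : List (Fin 3) | w.length = ℓ ∧ ∀ s ∈ w, s = 1 ∨ s = 2} = ℓ + 2 ∧
    dsc ({w : List (Fin 3) | w.length = ℓ ∧ ∀ s ∈ w, s = 0 ∨ s = 2} ∪
         {w : List (Fin 3) | w.length = ℓ ∧ ∀ s ∈ w, s = 1 ∨ s = 2}) = 3 * ℓ :=
  ⟨dsc_wordsOfLength (c := 2) (b := 1) (by decide) (by decide) ℓ,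
    dsc_wordsOfLength (c := 2) (b := 0) (by decide) (by decide) ℓ,
    dsc_add_wordsOfLength (a := 0) (b := 1) (c := 2) (by decide) (by decide) (by decide)
      (by decide) (by decide) (by decide) hℓ⟩
end

section
/- Let L₁ ⊆ Σ^{ℓ₁} and L₂ ⊆ Σ^{ℓ₂} be nonempty block languages over an alphabet of size k. Then dsc(L₁L₂) = dsc(L₁) + dsc(L₂) − 2, where L₁L₂ = {uv : u ∈ L₁, v ∈ L₂}. -/
/-- Concatenation of two languages. -/
def concatLang {α : Type*} (L₁ L₂ : Set (List α)) : Set (List α) :=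
  {w | ∃ u ∈ L₁, ∃ v ∈ L₂, w = u ++ v}

/-!
By Myhill–Nerode, `dsc L` is the number of distinct left quotients of `L`, the sink being the
empty quotient. For block languages, the quotient of `L₁L₂` by a word `w` with `|w| ≤ ℓ₁` is
`K L₂` for the quotient `K` of `L₁` by `w`; a longer word `w = u x` with `|u| = ℓ₁` gives `∅`
if `u ∉ L₁` and the quotient of `L₂` by `x` if `u ∈ L₁`. So the quotients of `L₁L₂` are those of
the two families `{K L₂}` and `{quotients of L₂}`. Since `L₂` is a nonempty block language,
`K ↦ K L₂` is injective, and a quotient `K L₂ ≠ ∅` of `L₂` consists of words of length `ℓ₂`,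
so it is `L₂` itself. The families thus share exactly `L₂ = {ε} L₂` and `∅`.
-/

open Set

namespace Language

variable {α : Type*}

theorem ncard_range_leftQuotient_accepts_le {σ : Type*} [Finite σ] (M : DFA α σ) :
    (range M.accepts.leftQuotient).ncard ≤ Nat.card σ :=
  calc (range M.accepts.leftQuotient).ncard
      ≤ (range M.acceptsFrom).ncard := by
        rw [leftQuotient_accepts]
        exact ncard_le_ncard (range_comp_subset_range _ _) (finite_range _)
    _ ≤ Nat.card σ := by
        rw [← image_univ, ← ncard_univ σ]
        exact ncard_image_le finite_univ

@[simp]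
theorem leftQuotient_zero (x : List α) : (0 : Language α).leftQuotient x = 0 := rfl

def IsBlock (L : Language α) (ℓ : ℕ) : Prop := ∀ w ∈ L, w.length = ℓ

namespace IsBlock

variable {L L₁ L₂ : Language α} {ℓ ℓ₁ ℓ₂ : ℕ} {u v w : List α}

theorem length_add_of_mem_leftQuotient (hL : L.IsBlock ℓ) (hv : v ∈ L.leftQuotient w) :
    w.length + v.length = ℓ := by
  simpa using hL _ hv

theorem leftQuotient_eq_zero (hL : L.IsBlock ℓ) (hw : ℓ < w.length) : L.leftQuotient w = 0 := by
  ext v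
  simp only [notMem_zero, iff_false]
  intro hv
  have := hL.length_add_of_mem_leftQuotient hv
  omega

theorem zero_mem_range_leftQuotient [Nonempty α] (hL : L.IsBlock ℓ) :
    0 ∈ range L.leftQuotient :=
  ⟨List.replicate (ℓ + 1) (Classical.arbitrary α), hL.leftQuotient_eq_zero (by simp)⟩

theorem leftQuotient_of_length_eq [DecidablePred (· ∈ L)] (hL : L.IsBlock ℓ)
    (hw : w.length = ℓ) : L.leftQuotient w = if w ∈ L then 1 else 0 := by
  ext v
  have eq_nil : v ∈ L.leftQuotient w → v = [] := fun hv =>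
    List.eq_nil_of_length_eq_zero (by have := hL.length_add_of_mem_leftQuotient hv; omega)
  split_ifs with hwL
  · simp only [mem_one]
    exact ⟨eq_nil, by rintro rfl; simpa using hwL⟩
  · simp only [notMem_zero, iff_false]
    intro hv
    obtain rfl := eq_nil hv
    exact hwL (by simpa using hv)

theorem leftQuotient_of_mem (hL : L.IsBlock ℓ) (hw : w ∈ L) : L.leftQuotient w = 1 := by
  classical
  rw [hL.leftQuotient_of_length_eq (hL w hw), if_pos hw]

theorem finite_range_leftQuotient [Finite α] (hL : L.IsBlock ℓ) :
    (range L.leftQuotient).Finite := by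
  refine (List.finite_length_le α ℓ).finite_subsets.subset ?_
  rintro _ ⟨w, rfl⟩ v hv
  have := hL.length_add_of_mem_leftQuotient hv
  simp only [mem_ofPred_eq]
  omega

theorem mul (h₁ : L₁.IsBlock ℓ₁) (h₂ : L₂.IsBlock ℓ₂) : (L₁ * L₂).IsBlock (ℓ₁ + ℓ₂) := by
  rintro _ ⟨u, hu, v, hv, rfl⟩
  simp [h₁ u hu, h₂ v hv]

theorem leftQuotient_mul (h₁ : L₁.IsBlock ℓ₁) (hw : w.length ≤ ℓ₁) :
    (L₁ * L₂).leftQuotient w = L₁.leftQuotient w * L₂ := by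
  ext v
  simp only [mem_leftQuotient, mem_mul]
  constructor
  · rintro ⟨u, hu, y, hy, huy⟩
    rcases List.append_eq_append_iff.1 huy with ⟨a, rfl, rfl⟩ | ⟨c, rfl, rfl⟩
    · obtain rfl : a = [] := List.eq_nil_of_length_eq_zero
        (by have := h₁ u hu; simp only [List.length_append] at hw; omega)
      exact ⟨[], by simpa using hu, v, by simpa using hy, rfl⟩
    · exact ⟨c, hu, y, hy, rfl⟩
  · rintro ⟨m, hm, y, hy, rfl⟩
    exact ⟨w ++ m, hm, y, hy, by simp⟩

theorem mul_left_injective (hL : L.IsBlock ℓ) (hv : v ∈ L) :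
    Function.Injective (· * L) := by
  suffices ∀ K K' : Language α, K * L = K' * L → K ≤ K' from
    fun K K' h => le_antisymm (this K K' h) (this K' K h.symm)
  intro K K' h m hm
  obtain ⟨m', hm', v', hv', hmv⟩ : m ++ v ∈ K' * L := h ▸ ⟨m, hm, v, hv, rfl⟩
  obtain ⟨rfl, -⟩ := List.append_inj' hmv (by rw [hL _ hv', hL _ hv])
  exact hm'

theorem eq_zero_or_eq_nil_of_mul_eq_leftQuotient (hL : L.IsBlock ℓ) {K : Language α}
    (h : K * L = L.leftQuotient w) : K * L = 0 ∨ w = [] := by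
  refine or_iff_not_imp_left.2 fun hne => ?_
  obtain ⟨_, m, hm, y, hy, rfl⟩ := Set.nonempty_iff_ne_empty.2 hne
  have := hL.length_add_of_mem_leftQuotient (h ▸ ⟨m, hm, y, hy, rfl⟩ : m ++ y ∈ L.leftQuotient w)
  simp only [List.length_append, hL y hy] at this
  exact List.eq_nil_of_length_eq_zero (by omega)

theorem range_leftQuotient_mul (h₁ : L₁.IsBlock ℓ₁) (h₂ : L₂.IsBlock ℓ₂) (hu : u ∈ L₁)
    (hv : v ∈ L₂) :
    range (L₁ * L₂).leftQuotient =
      (· * L₂) '' range L₁.leftQuotient ∪ range L₂.leftQuotient := by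
  classical
  apply Subset.antisymm
  · rintro _ ⟨w, rfl⟩
    rcases le_or_gt w.length ℓ₁ with hw | hw
    · exact Or.inl ⟨_, ⟨w, rfl⟩, (h₁.leftQuotient_mul hw).symm⟩
    obtain ⟨w₁, x, hw₁, rfl⟩ : ∃ w₁ x, w₁.length = ℓ₁ ∧ w = w₁ ++ x :=
      ⟨w.take ℓ₁, w.drop ℓ₁, by simp; omega, (List.take_append_drop _ _).symm⟩
    rw [leftQuotient_append, h₁.leftQuotient_mul hw₁.le, h₁.leftQuotient_of_length_eq hw₁]
    split_ifs
    · rw [one_mul]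
      exact Or.inr ⟨x, rfl⟩
    · rw [zero_mul, leftQuotient_zero]
      exact Or.inl ⟨0, ⟨w₁ ++ x, h₁.leftQuotient_eq_zero hw⟩, zero_mul L₂⟩
  · rintro _ (⟨_, ⟨w, rfl⟩, rfl⟩ | ⟨x, rfl⟩)
    · rcases le_or_gt w.length ℓ₁ with hw | hw
      · exact ⟨w, h₁.leftQuotient_mul hw⟩
      · refine ⟨w ++ v, ?_⟩
        rw [h₁.leftQuotient_eq_zero hw]
        exact ((h₁.mul h₂).leftQuotient_eq_zero (by simp [h₂ v hv]; omega)).trans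
          (zero_mul L₂).symm
    · refine ⟨u ++ x, ?_⟩
      rw [leftQuotient_append, h₁.leftQuotient_mul (h₁ u hu).le, h₁.leftQuotient_of_mem hu,
        one_mul]

theorem ncard_range_leftQuotient_mul_add_two [Finite α] [Nonempty α] (h₁ : L₁.IsBlock ℓ₁)
    (h₂ : L₂.IsBlock ℓ₂) (hu : u ∈ L₁) (hv : v ∈ L₂) :
    (range (L₁ * L₂).leftQuotient).ncard + 2 =
      (range L₁.leftQuotient).ncard + (range L₂.leftQuotient).ncard := by
  have h_inter : (· * L₂) '' range L₁.leftQuotient ∩ range L₂.leftQuotient = {L₂, 0} := by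
    apply Subset.antisymm
    · rintro _ ⟨⟨K, -, rfl⟩, x, hx⟩
      rcases h₂.eq_zero_or_eq_nil_of_mul_eq_leftQuotient hx.symm with h | rfl
      · exact Or.inr h
      · exact Or.inl hx.symm
    · refine insert_subset_iff.2 ⟨?_, singleton_subset_iff.2 ?_⟩
      · exact ⟨⟨1, ⟨u, h₁.leftQuotient_of_mem hu⟩, one_mul L₂⟩, [], rfl⟩
      · exact ⟨⟨0, h₁.zero_mem_range_leftQuotient, zero_mul L₂⟩, h₂.zero_mem_range_leftQuotient⟩
  have h_ne : L₂ ≠ 0 := fun h => notMem_zero v (h ▸ hv)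
  rw [h₁.range_leftQuotient_mul h₂ hu hv, ← ncard_pair h_ne, ← h_inter,
    ncard_union_add_ncard_inter _ _ (h₁.finite_range_leftQuotient.image _)
      h₂.finite_range_leftQuotient,
    ncard_image_of_injective _ (h₂.mul_left_injective hv)]

end IsBlock

end Language

/-- When `L` has infinitely many quotients both sides are `0`: no DFA accepts `L`, and
`sInf ∅ = 0`. -/
theorem dsc_eq_ncard_range_leftQuotient {α : Type} (L : Language α) :
    dsc L = (range L.leftQuotient).ncard := by
  by_cases hfin : (range L.leftQuotient).Finite
  · have : Finite (range L.leftQuotient) := hfin.to_subtype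
    rw [← Nat.card_coe_set_eq]
    refine IsLeast.csInf_eq ⟨?_, ?_⟩
    · refine ⟨DFA.reindex (Finite.equivFin _) L.toDFA, ?_⟩
      rw [DFA.accepts_reindex, Language.accepts_toDFA]
    · rintro n ⟨M, rfl⟩
      simpa using Language.ncard_range_leftQuotient_accepts_le M
  · have : {n | ∃ M : DFA α (Fin n), M.accepts = L} = ∅ :=
      eq_empty_of_forall_notMem fun n ⟨M, hM⟩ =>
        hfin (Language.IsRegular.finite_range_leftQuotient ⟨Fin n, inferInstance, M, hM⟩)
    unfold dsc
    rw [this, Nat.sInf_empty, Infinite.ncard hfin]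

theorem concatLang_eq_mul {α : Type*} (L₁ L₂ : Language α) :
    concatLang L₁ L₂ = L₁ * L₂ := by
  ext w
  constructor <;> rintro ⟨u, hu, v, hv, h⟩ <;> exact ⟨u, hu, v, hv, h.symm⟩

theorem stmt16_general {α : Type} [Fintype α] (ℓ₁ ℓ₂ : ℕ)
    (hl₁ : 0 < ℓ₁)
    (L₁ L₂ : Set (List α))
    (hL₁ : ∀ w ∈ L₁, w.length = ℓ₁) (hL₂ : ∀ w ∈ L₂, w.length = ℓ₂)
    (hne₁ : L₁.Nonempty) (hne₂ : L₂.Nonempty) :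
    dsc (concatLang L₁ L₂) = dsc L₁ + dsc L₂ - 2 := by
  obtain ⟨u, hu⟩ := hne₁
  obtain ⟨v, hv⟩ := hne₂
  have : Nonempty α := ⟨u.head (List.ne_nil_of_length_pos (hL₁ u hu ▸ hl₁))⟩
  have h_count := Language.IsBlock.ncard_range_leftQuotient_mul_add_two (L₁ := L₁) (L₂ := L₂)
    hL₁ hL₂ hu hv
  have h_concat := (congrArg dsc (concatLang_eq_mul L₁ L₂)).trans
    (dsc_eq_ncard_range_leftQuotient _)
  rw [h_concat, dsc_eq_ncard_range_leftQuotient L₁, dsc_eq_ncard_range_leftQuotient L₂]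
  omega

theorem stmt16 {α : Type} [Fintype α] (k ℓ₁ ℓ₂ : ℕ) (hcard : Fintype.card α = k)
    (hl₁ : 0 < ℓ₁) (hl₂ : 0 < ℓ₂)
    (L₁ L₂ : Set (List α))
    (hL₁ : ∀ w ∈ L₁, w.length = ℓ₁) (hL₂ : ∀ w ∈ L₂, w.length = ℓ₂)
    (hne₁ : L₁.Nonempty) (hne₂ : L₂.Nonempty) :
    dsc (concatLang L₁ L₂) = dsc L₁ + dsc L₂ - 2 :=
  stmt16_general ℓ₁ ℓ₂ hl₁ L₁ L₂ hL₁ hL₂ hne₁ hne₂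
end
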